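/- arXiv:2205.12392 — 2 statements merged into one kernel-verified Lean document; each statement's English description precedes it below -/
import Mathlib

section
/- Let W, Z₁, Z₂, Φ₁, Φ₂ be finite nonempty types and let p be a joint probability mass function on W × Z₁ × Z₂ × Φ₁ × Φ₂ that factorizes according to the generative model p(w, z₁, z₂, φ₁, φ₂) = p_W(w) · p_{Φ₁}(φ₁) · p_{Φ₂}(φ₂) · p₁(z₁ | w, φ₁) · p₂(z₂ | w, φ₂), with all factors strictly positive. Fix z₁, z₂, φ₁, φ₂, regard agent 1 as the speaker and agent 2 as the listener, let the target distribution be the posterior π(w) = P(w | z₁, z₂, φ₁, φ₂) and the proposal distribution be q(w) = P(w | z₁, φ₁) (both defined as ratios of marginals of p). Then for any current sign w and proposed sign w′, the Metropolis–Hastings ratio satisfies (π(w′)·q(w))/(π(w)·q(w′)) = p₂(z₂ | w′, φ₂) / p₂(z₂ | w, φ₂). Consequently the MH acceptance probability equals min(1, p₂(z₂ | w′, φ₂)/p₂(z₂ | w, φ₂)), which the listener can compute using only its own variables z₂, φ₂ and the two signs. -/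
/-- In the two-agent generative model, with target posterior `π(w) = P(w|z₁,z₂,φ₁,φ₂)`
and proposal `q(w) = P(w|z₁,φ₁)` (ratios of marginals of the joint pmf `p`),
the Metropolis–Hastings ratio satisfies
`(π(w′)·q(w))/(π(w)·q(w′)) = p₂(z₂|w′,φ₂)/p₂(z₂|w,φ₂)`, hence the MH acceptance
probability equals `min(1, p₂(z₂|w′,φ₂)/p₂(z₂|w,φ₂))`. -/
theorem mh_naming_game_acceptance_ratio
    {W Z₁ Z₂ Φ₁ Φ₂ : Type*}
    [Fintype W] [Nonempty W] [Fintype Z₁] [Nonempty Z₁] [Fintype Z₂] [Nonempty Z₂]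
    [Fintype Φ₁] [Nonempty Φ₁] [Fintype Φ₂] [Nonempty Φ₂]
    (pW : W → ℝ) (hpWpos : ∀ w, 0 < pW w) (hpWsum : ∑ w, pW w = 1)
    (pΦ₁ : Φ₁ → ℝ) (hpΦ₁pos : ∀ φ, 0 < pΦ₁ φ) (hpΦ₁sum : ∑ φ, pΦ₁ φ = 1)
    (pΦ₂ : Φ₂ → ℝ) (hpΦ₂pos : ∀ φ, 0 < pΦ₂ φ) (hpΦ₂sum : ∑ φ, pΦ₂ φ = 1)
    (p₁ : Z₁ → W → Φ₁ → ℝ) (hp₁pos : ∀ z w φ, 0 < p₁ z w φ)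
    (hp₁sum : ∀ w φ, ∑ z, p₁ z w φ = 1)
    (p₂ : Z₂ → W → Φ₂ → ℝ) (hp₂pos : ∀ z w φ, 0 < p₂ z w φ)
    (hp₂sum : ∀ w φ, ∑ z, p₂ z w φ = 1)
    (p : W → Z₁ → Z₂ → Φ₁ → Φ₂ → ℝ)
    (hp : ∀ w z₁ z₂ φ₁ φ₂,
      p w z₁ z₂ φ₁ φ₂ = pW w * pΦ₁ φ₁ * pΦ₂ φ₂ * p₁ z₁ w φ₁ * p₂ z₂ w φ₂)
    (z₁ : Z₁) (z₂ : Z₂) (φ₁ : Φ₁) (φ₂ : Φ₂)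
    (π q : W → ℝ)
    -- target: the posterior π(w) = P(w | z₁, z₂, φ₁, φ₂)
    (hπ : ∀ w, π w = p w z₁ z₂ φ₁ φ₂ / (∑ w', p w' z₁ z₂ φ₁ φ₂))
    -- proposal: the speaker's posterior q(w) = P(w | z₁, φ₁)
    (hq : ∀ w, q w = (∑ z₂', ∑ φ₂', p w z₁ z₂' φ₁ φ₂') /
      (∑ w', ∑ z₂', ∑ φ₂', p w' z₁ z₂' φ₁ φ₂')) :
    ∀ w w' : W,
      (π w' * q w) / (π w * q w') = p₂ z₂ w' φ₂ / p₂ z₂ w φ₂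
      ∧ min 1 ((π w' * q w) / (π w * q w')) = min 1 (p₂ z₂ w' φ₂ / p₂ z₂ w φ₂) := by
  intro w w'
  -- marginal over z₂', φ₂'
  have key : ∀ v : W, (∑ z₂', ∑ φ₂', p v z₁ z₂' φ₁ φ₂')
      = pW v * pΦ₁ φ₁ * p₁ z₁ v φ₁ := by
    intro v
    simp only [hp]
    rw [Finset.sum_comm]
    have h1 : ∀ φ : Φ₂, (∑ z, pW v * pΦ₁ φ₁ * pΦ₂ φ * p₁ z₁ v φ₁ * p₂ z v φ)
        = pW v * pΦ₁ φ₁ * p₁ z₁ v φ₁ * pΦ₂ φ := by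
      intro φ
      rw [← Finset.mul_sum, hp₂sum]
      ring
    simp_rw [h1]
    rw [← Finset.mul_sum, hpΦ₂sum, mul_one]
  have hDpos : 0 < ∑ w', p w' z₁ z₂ φ₁ φ₂ :=
    Finset.sum_pos (fun i _ => by
      rw [hp]
      exact mul_pos (mul_pos (mul_pos (mul_pos (hpWpos i) (hpΦ₁pos φ₁)) (hpΦ₂pos φ₂)) (hp₁pos z₁ i φ₁)) (hp₂pos z₂ i φ₂)) Finset.univ_nonempty
  have hEpos : 0 < ∑ w', ∑ z₂', ∑ φ₂', p w' z₁ z₂' φ₁ φ₂' :=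
    Finset.sum_pos (fun i _ => by
      rw [key]
      exact mul_pos (mul_pos (hpWpos i) (hpΦ₁pos φ₁)) (hp₁pos z₁ i φ₁)) Finset.univ_nonempty
  have hratio : (π w' * q w) / (π w * q w') = p₂ z₂ w' φ₂ / p₂ z₂ w φ₂ := by
    rw [hπ, hπ, hq, hq, key, key, hp, hp]
    have h1 := (hpWpos w).ne'
    have h2 := (hpWpos w').ne'
    have h3 := (hpΦ₁pos φ₁).ne'
    have h4 := (hpΦ₂pos φ₂).ne'
    have h5 := (hp₁pos z₁ w φ₁).ne'
    have h6 := (hp₁pos z₁ w' φ₁).ne'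
    have h7 := (hp₂pos z₂ w φ₂).ne'
    have h8 := (hp₂pos z₂ w' φ₂).ne'
    field_simp
  exact ⟨hratio, by rw [hratio]⟩
end

section
/- Let W, Z₁, Z₂, Φ₁, Φ₂ be finite nonempty types and let p be a joint probability mass function on W × Z₁ × Z₂ × Φ₁ × Φ₂ that factorizes according to the generative model p(w, z₁, z₂, φ₁, φ₂) = p_W(w) · p_{Φ₁}(φ₁) · p_{Φ₂}(φ₂) · p₁(z₁ | w, φ₁) · p₂(z₂ | w, φ₂), with all factors strictly positive. Fix z₁, z₂, φ₁, φ₂ and define the MH-communication kernel K on W as follows: from current sign w, propose w′ ~ P(·| z₁, φ₁) and accept (move to w′) with probability min(1, p₂(z₂ | w′, φ₂)/p₂(z₂ | w, φ₂)), otherwise stay at w. Then K satisfies detailed balance with respect to the posterior π(w) = P(w | z₁, z₂, φ₁, φ₂), and in particular π is a stationary distribution of K. -/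
private lemma mh_aux (a b c sa sb m S T : ℝ) (hsa : sa ≠ 0) (hsb : sb ≠ 0) :
    a * (c * sa) / S * (b / T * (m / sa)) = b * (c * sb) / S * (a / T * (m / sb)) := by
  simp only [div_eq_mul_inv]
  linear_combination (a * c * b * m * S⁻¹ * T⁻¹) * mul_inv_cancel₀ hsa
    - (a * c * b * m * S⁻¹ * T⁻¹) * mul_inv_cancel₀ hsb

/-- One round of MH communication in the naming game — the speaker proposes a sign
`w′` from its own posterior `P(·|z₁,φ₁)` and the listener accepts with probability
`min(1, p₂(z₂|w′,φ₂)/p₂(z₂|w,φ₂))`, staying at `w` on rejection — defines a kernel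
`K` satisfying detailed balance with respect to the joint posterior
`π(w) = P(w|z₁,z₂,φ₁,φ₂)`; in particular `π` is stationary for `K`. -/
theorem mh_communication_detailed_balance
    {W Z₁ Z₂ Φ₁ Φ₂ : Type*}
    [Fintype W] [Nonempty W] [DecidableEq W]
    [Fintype Z₁] [Nonempty Z₁] [Fintype Z₂] [Nonempty Z₂]
    [Fintype Φ₁] [Nonempty Φ₁] [Fintype Φ₂] [Nonempty Φ₂]
    (pW : W → ℝ) (hpWpos : ∀ w, 0 < pW w) (hpWsum : ∑ w, pW w = 1)
    (pΦ₁ : Φ₁ → ℝ) (hpΦ₁pos : ∀ φ, 0 < pΦ₁ φ) (hpΦ₁sum : ∑ φ, pΦ₁ φ = 1)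
    (pΦ₂ : Φ₂ → ℝ) (hpΦ₂pos : ∀ φ, 0 < pΦ₂ φ) (hpΦ₂sum : ∑ φ, pΦ₂ φ = 1)
    (p₁ : Z₁ → W → Φ₁ → ℝ) (hp₁pos : ∀ z w φ, 0 < p₁ z w φ)
    (hp₁sum : ∀ w φ, ∑ z, p₁ z w φ = 1)
    (p₂ : Z₂ → W → Φ₂ → ℝ) (hp₂pos : ∀ z w φ, 0 < p₂ z w φ)
    (hp₂sum : ∀ w φ, ∑ z, p₂ z w φ = 1)
    (p : W → Z₁ → Z₂ → Φ₁ → Φ₂ → ℝ)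
    (hp : ∀ w z₁ z₂ φ₁ φ₂,
      p w z₁ z₂ φ₁ φ₂ = pW w * pΦ₁ φ₁ * pΦ₂ φ₂ * p₁ z₁ w φ₁ * p₂ z₂ w φ₂)
    (z₁ : Z₁) (z₂ : Z₂) (φ₁ : Φ₁) (φ₂ : Φ₂)
    (π q : W → ℝ)
    -- target: the posterior π(w) = P(w | z₁, z₂, φ₁, φ₂)
    (hπ : ∀ w, π w = p w z₁ z₂ φ₁ φ₂ / (∑ w', p w' z₁ z₂ φ₁ φ₂))
    -- proposal: the speaker's posterior q(w) = P(w | z₁, φ₁)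
    (hq : ∀ w, q w = (∑ z₂', ∑ φ₂', p w z₁ z₂' φ₁ φ₂') /
      (∑ w', ∑ z₂', ∑ φ₂', p w' z₁ z₂' φ₁ φ₂'))
    (K : W → W → ℝ)
    -- moving to a different sign w′: propose w′ and accept
    (hKne : ∀ w w', w' ≠ w →
      K w w' = q w' * min 1 (p₂ z₂ w' φ₂ / p₂ z₂ w φ₂))
    -- staying at w: propose w itself, or propose some w″ ≠ w and reject
    (hKeq : ∀ w, K w w =
      q w + ∑ w'' ∈ Finset.univ.filter (fun w'' => w'' ≠ w),
        q w'' * (1 - min 1 (p₂ z₂ w'' φ₂ / p₂ z₂ w φ₂))) :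
    (∀ w w', π w * K w w' = π w' * K w' w)
    ∧ (∀ w', ∑ w, π w * K w w' = π w') := by
  -- positivity of the joint pmf at the fixed observations
  have hppos : ∀ w, 0 < p w z₁ z₂ φ₁ φ₂ := fun w => by
    rw [hp]
    exact mul_pos (mul_pos (mul_pos (mul_pos (hpWpos w) (hpΦ₁pos φ₁))
      (hpΦ₂pos φ₂)) (hp₁pos z₁ w φ₁)) (hp₂pos z₂ w φ₂)
  have hS : 0 < ∑ w', p w' z₁ z₂ φ₁ φ₂ :=
    Finset.sum_pos (fun w _ => hppos w) Finset.univ_nonempty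
  -- marginal over z₂, φ₂
  have hA : ∀ w, (∑ z₂', ∑ φ₂', p w z₁ z₂' φ₁ φ₂')
      = pW w * pΦ₁ φ₁ * p₁ z₁ w φ₁ := by
    intro w
    rw [Finset.sum_comm]
    calc ∑ φ₂', ∑ z₂', p w z₁ z₂' φ₁ φ₂'
        = ∑ φ₂', (pW w * pΦ₁ φ₁ * p₁ z₁ w φ₁) * pΦ₂ φ₂' * ∑ z₂', p₂ z₂' w φ₂' := by
          refine Finset.sum_congr rfl fun φ' _ => ?_
          rw [Finset.mul_sum]
          exact Finset.sum_congr rfl fun z' _ => by rw [hp]; ring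
      _ = pW w * pΦ₁ φ₁ * p₁ z₁ w φ₁ := by
          simp only [hp₂sum, mul_one]
          rw [← Finset.mul_sum, hpΦ₂sum, mul_one]
  have hBpos : ∀ w, 0 < pW w * pΦ₁ φ₁ * p₁ z₁ w φ₁ := fun w =>
    mul_pos (mul_pos (hpWpos w) (hpΦ₁pos φ₁)) (hp₁pos z₁ w φ₁)
  have hT : 0 < ∑ w', pW w' * pΦ₁ φ₁ * p₁ z₁ w' φ₁ :=
    Finset.sum_pos (fun w _ => hBpos w) Finset.univ_nonempty
  have hq' : ∀ w, q w = (pW w * pΦ₁ φ₁ * p₁ z₁ w φ₁)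
      / (∑ w', pW w' * pΦ₁ φ₁ * p₁ z₁ w' φ₁) := by
    intro w
    rw [hq, hA]
    congr 1
    exact Finset.sum_congr rfl fun w' _ => hA w'
  have hπ' : ∀ w, π w = (pW w * pΦ₁ φ₁ * p₁ z₁ w φ₁) * (pΦ₂ φ₂ * p₂ z₂ w φ₂)
      / (∑ w', p w' z₁ z₂ φ₁ φ₂) := by
    intro w
    rw [hπ, hp]; ring_nf
  have hmin : ∀ a b : ℝ, 0 < b → min 1 (a / b) = min b a / b := by
    intro a b hb
    rw [show (1 : ℝ) = b / b by rw [div_self hb.ne'],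
      min_div_div_right hb.le]
  -- detailed balance
  have db : ∀ w w', π w * K w w' = π w' * K w' w := by
    intro w w'
    by_cases h : w' = w
    · subst h; rfl
    · rw [hKne w w' h, hKne w' w (Ne.symm h),
        hmin _ _ (hp₂pos z₂ w φ₂), hmin _ _ (hp₂pos z₂ w' φ₂),
        min_comm (p₂ z₂ w' φ₂) (p₂ z₂ w φ₂), hπ' w, hπ' w', hq' w, hq' w']
      exact mh_aux _ _ _ _ _ _ _ _ (hp₂pos z₂ w φ₂).ne' (hp₂pos z₂ w' φ₂).ne'
  refine ⟨db, ?_⟩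
  -- q sums to 1
  have hsumq : ∑ w, q w = 1 := by
    simp only [hq']
    rw [← Finset.sum_div, div_self hT.ne']
  -- rows of K sum to 1
  have hrow : ∀ w, ∑ w', K w w' = 1 := by
    intro w
    rw [← Finset.add_sum_erase _ _ (Finset.mem_univ w), hKeq w,
      Finset.filter_ne']
    have h1 : ∑ w' ∈ Finset.univ.erase w, K w w'
        = ∑ w' ∈ Finset.univ.erase w,
            q w' * min 1 (p₂ z₂ w' φ₂ / p₂ z₂ w φ₂) :=
      Finset.sum_congr rfl fun w' hw' =>
        hKne w w' (Finset.ne_of_mem_erase hw')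
    rw [h1, add_assoc, ← Finset.sum_add_distrib]
    have h2 : ∑ w'' ∈ Finset.univ.erase w,
        (q w'' * (1 - min 1 (p₂ z₂ w'' φ₂ / p₂ z₂ w φ₂))
          + q w'' * min 1 (p₂ z₂ w'' φ₂ / p₂ z₂ w φ₂))
        = ∑ w'' ∈ Finset.univ.erase w, q w'' :=
      Finset.sum_congr rfl fun w'' _ => by ring
    rw [h2, Finset.add_sum_erase _ _ (Finset.mem_univ w), hsumq]
  intro w'
  calc ∑ w, π w * K w w' = ∑ w, π w' * K w' w :=
        Finset.sum_congr rfl fun w _ => db w w'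
    _ = π w' * ∑ w, K w' w := by rw [Finset.mul_sum]
    _ = π w' := by rw [hrow, mul_one]
end
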